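/- arXiv:2605.09975 — 4 statements merged into one kernel-verified Lean document; each statement's English description precedes it below -/
import Mathlib

section
/- Let 1 < p < ∞ with conjugate q, let (v*, r*) be optimal for the primal Chebyshev-center problem max r s.t. ĝ_i^T v ≥ r, ‖v‖_q ≤ 1, and let α* be optimal for the dual min_{α∈Δ^m} ‖Σ α_i ĝ_i‖_p. Set w* = Σ_i α*_i ĝ_i. If r* > 0, then w* ≠ 0 and v* = sgn(w*) ⊙ |w*|^{p-1} / ‖w*‖_p^{p-1}. -/
/-!
Weak duality gives `r⋆ ≤ ⟨w⋆, v⋆⟩`, so `w⋆ ≠ 0`. Differentiating the dual objective at `α⋆` along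
the segment towards each vertex of the simplex shows that
`u = sgn(w⋆) ⊙ |w⋆|^(p-1) / ‖w⋆‖_p^(p-1)`, a unit vector for `‖·‖_q`, satisfies `ĝ iᵀ u ≥ ‖w⋆‖_p`
for all `i`. Hence `‖w⋆‖_p ≤ r⋆ ≤ ⟨w⋆, v⋆⟩ ≤ ‖w⋆‖_p`, and equality in Hölder's inequality, that is
termwise equality in Young's inequality, forces `v⋆ = u`.
-/

open Finset

noncomputable def dualMap (p x : ℝ) : ℝ := Real.sign x * |x| ^ (p - 1)

section DualMap

variable {p q : ℝ}

lemma dualMap_eq_abs_rpow_mul (p x : ℝ) : dualMap p x = |x| ^ (p - 2) * x := by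
  rcases lt_trichotomy x 0 with hx | rfl | hx
  · rw [dualMap, Real.sign_of_neg hx, show p - 1 = p - 2 + 1 by ring,
      Real.rpow_add_one (abs_ne_zero.2 hx.ne), abs_of_neg hx]
    ring
  · simp [dualMap]
  · rw [dualMap, Real.sign_of_pos hx, show p - 1 = p - 2 + 1 by ring,
      Real.rpow_add_one (abs_ne_zero.2 hx.ne'), abs_of_pos hx]
    ring

lemma dualMap_mul_self (hp : p ≠ 0) (x : ℝ) : dualMap p x * x = |x| ^ p := by
  rcases eq_or_ne x 0 with rfl | hx
  · simp [dualMap, Real.zero_rpow hp]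
  · rw [dualMap_eq_abs_rpow_mul, mul_assoc, ← abs_mul_abs_self, ← mul_assoc,
      ← Real.rpow_add_one (abs_ne_zero.2 hx), ← Real.rpow_add_one (abs_ne_zero.2 hx)]
    ring_nf

lemma abs_dualMap (hp : p ≠ 1) (x : ℝ) : |dualMap p x| = |x| ^ (p - 1) := by
  rcases eq_or_ne x 0 with rfl | hx
  · simp [dualMap, Real.zero_rpow (sub_ne_zero.2 hp)]
  · rcases Real.sign_apply_eq_of_ne_zero x hx with h | h <;>
      simp [dualMap, h, abs_of_nonneg (Real.rpow_nonneg (abs_nonneg x) _)]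

lemma dualMap_div {c : ℝ} (hc : 0 < c) (x : ℝ) :
    dualMap p (x / c) = dualMap p x / c ^ (p - 1) := by
  rw [dualMap_eq_abs_rpow_mul, dualMap_eq_abs_rpow_mul, abs_div, abs_of_pos hc,
    Real.div_rpow (abs_nonneg x) hc.le, show p - 1 = p - 2 + 1 by ring, Real.rpow_add_one hc.ne']
  ring

lemma hasDerivAt_abs_rpow_dualMap (hp : 1 < p) (x : ℝ) :
    HasDerivAt (fun x : ℝ ↦ |x| ^ p) (p * dualMap p x) x := by
  simpa [dualMap_eq_abs_rpow_mul, mul_assoc] using _root_.hasDerivAt_abs_rpow x hp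

lemma eq_dualMap_of_mul_eq_young {x y : ℝ} (hpq : p.HolderConjugate q)
    (h : x * y = |x| ^ p / p + |y| ^ q / q) : y = dualMap p x := by
  have habs : |x| * |y| = |x| ^ p / p + |y| ^ q / q :=
    le_antisymm (Real.young_inequality_of_nonneg (abs_nonneg x) (abs_nonneg y) hpq)
      (h ▸ (le_abs_self _).trans (abs_mul x y).le)
  have hy : |y| = |x| ^ (p - 1) := by
    refine Real.rpow_left_injOn hpq.symm.ne_zero (abs_nonneg y)
      (Real.rpow_nonneg (abs_nonneg x) _) ?_
    dsimp only
    rw [← Real.rpow_mul (abs_nonneg x), hpq.sub_one_mul_conj,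
      ← (Real.young_inequality_eq_iff_of_nonneg (abs_nonneg x) (abs_nonneg y) hpq).1 habs]
  have hsign : x * y = |x| * |y| := h.trans habs.symm
  rcases lt_trichotomy x 0 with hx | rfl | hx
  · rw [dualMap, Real.sign_of_neg hx, ← hy]
    rw [abs_of_neg hx] at hsign
    nlinarith [abs_nonneg y, le_abs_self y, neg_abs_le y]
  · simpa [dualMap, Real.zero_rpow hpq.sub_one_ne_zero] using hy
  · rw [dualMap, Real.sign_of_pos hx, ← hy, one_mul]
    rw [abs_of_pos hx] at hsign
    exact mul_left_cancel₀ hx.ne' hsign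

end DualMap

noncomputable def pNorm {ι : Type*} [Fintype ι] (p : ℝ) (x : ι → ℝ) : ℝ :=
  (∑ j, |x j| ^ p) ^ (1 / p)

section PNorm

variable {ι : Type*} [Fintype ι] {p q : ℝ} {x y : ι → ℝ}

lemma pNorm_rpow (hp : p ≠ 0) (x : ι → ℝ) : pNorm p x ^ p = ∑ j, |x j| ^ p := by
  rw [pNorm, one_div, Real.rpow_inv_rpow (by positivity) hp]

lemma pNorm_pos (hx : x ≠ 0) (p : ℝ) : 0 < pNorm p x := by
  obtain ⟨j, hj⟩ := Function.ne_iff.1 hx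
  exact Real.rpow_pos_of_pos (sum_pos' (fun k _ ↦ by positivity)
    ⟨j, mem_univ j, Real.rpow_pos_of_pos (abs_pos.2 hj) p⟩) _

lemma pNorm_le_pNorm_iff (hp : 0 < p) :
    pNorm p x ≤ pNorm p y ↔ ∑ j, |x j| ^ p ≤ ∑ j, |y j| ^ p :=
  Real.rpow_le_rpow_iff (by positivity) (by positivity) (by positivity)

lemma sum_abs_rpow_le_one_of_pNorm_le_one (hp : 0 < p) (h : pNorm p x ≤ 1) :
    ∑ j, |x j| ^ p ≤ 1 := by
  simpa [pNorm_rpow hp.ne'] using Real.rpow_le_rpow (by unfold pNorm; positivity) h hp.le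

lemma pNorm_dualMap_div_pNorm (hpq : p.HolderConjugate q) (hx : x ≠ 0) :
    pNorm q (fun j ↦ dualMap p (x j) / pNorm p x ^ (p - 1)) = 1 := by
  have hN := pNorm_pos hx p
  have hterm (j : ι) :
      |dualMap p (x j) / pNorm p x ^ (p - 1)| ^ q = |x j| ^ p / pNorm p x ^ p := by
    rw [abs_div, abs_dualMap hpq.lt.ne', abs_of_pos (Real.rpow_pos_of_pos hN _),
      Real.div_rpow (by positivity) (by positivity), ← Real.rpow_mul (abs_nonneg _),
      ← Real.rpow_mul hN.le, hpq.sub_one_mul_conj]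
  rw [pNorm, sum_congr rfl fun j _ ↦ hterm j, ← sum_div, ← pNorm_rpow hpq.ne_zero x,
    div_self (Real.rpow_pos_of_pos hN p).ne', Real.one_rpow]

/-- Equality case of Hölder's inequality, for a `p`-normalized `x`. -/
lemma eq_dualMap_of_one_le_sum_mul (hpq : p.HolderConjugate q) (hx : ∑ j, |x j| ^ p = 1)
    (hy : ∑ j, |y j| ^ q ≤ 1) (h : 1 ≤ ∑ j, x j * y j) (j : ι) : y j = dualMap p (x j) := by
  have hyoung : ∀ j ∈ univ, x j * y j ≤ |x j| ^ p / p + |y j| ^ q / q :=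
    fun j _ ↦ Real.young_inequality _ _ hpq
  have hsum : ∑ j, (|x j| ^ p / p + |y j| ^ q / q) ≤ ∑ j, x j * y j :=
    calc ∑ j, (|x j| ^ p / p + |y j| ^ q / q) = (∑ j, |x j| ^ p) / p + (∑ j, |y j| ^ q) / q := by
          rw [sum_add_distrib, sum_div, sum_div]
      _ ≤ 1 / p + 1 / q := by rw [hx]; gcongr; exact hpq.symm.pos.le
      _ = 1 := by rw [one_div, one_div, hpq.inv_add_inv_eq_one]
      _ ≤ ∑ j, x j * y j := h
  exact eq_dualMap_of_mul_eq_young hpq <|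
    (sum_eq_sum_iff_of_le hyoung).1 (le_antisymm (sum_le_sum hyoung) hsum) j (mem_univ j)

lemma eq_dualMap_div_pNorm_of_pNorm_le_sum_mul (hpq : p.HolderConjugate q) (hx : x ≠ 0)
    (hy : pNorm q y ≤ 1) (h : pNorm p x ≤ ∑ j, x j * y j) (j : ι) :
    y j = dualMap p (x j) / pNorm p x ^ (p - 1) := by
  have hN := pNorm_pos hx p
  rw [← dualMap_div hN]
  refine eq_dualMap_of_one_le_sum_mul hpq (x := fun j ↦ x j / pNorm p x) ?_
    (sum_abs_rpow_le_one_of_pNorm_le_one hpq.symm.pos hy) ?_ j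
  · simp only [abs_div, abs_of_pos hN, Real.div_rpow (abs_nonneg _) hN.le, ← sum_div,
      ← pNorm_rpow hpq.ne_zero x]
    exact div_self (Real.rpow_pos_of_pos hN p).ne'
  · simp only [div_mul_eq_mul_div, ← sum_div]
    rwa [le_div_iff₀ hN, one_mul]

lemma pNorm_le_sum_mul_dualMap_div_pNorm (hp : 1 < p) {w d : ι → ℝ} (hw : w ≠ 0)
    (h : ∑ j, |w j| ^ p ≤ ∑ j, dualMap p (w j) * d j) :
    pNorm p w ≤ ∑ j, d j * (dualMap p (w j) / pNorm p w ^ (p - 1)) := by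
  have hN := pNorm_pos hw p
  simp only [← mul_div_assoc, ← sum_div]
  rw [le_div_iff₀ (Real.rpow_pos_of_pos hN _)]
  calc pNorm p w * pNorm p w ^ (p - 1) = pNorm p w ^ p := by
        rw [← Real.rpow_one_add' hN.le (by linarith)]; ring_nf
    _ = ∑ j, |w j| ^ p := pNorm_rpow (by linarith) w
    _ ≤ ∑ j, d j * dualMap p (w j) := by simpa only [mul_comm] using h

lemma sum_abs_rpow_le_sum_dualMap_mul (hp : 1 < p) (w d : ι → ℝ)
    (hmin : IsMinOn (fun t : ℝ ↦ ∑ j, |w j + t * (d j - w j)| ^ p) (Set.Icc 0 1) 0) :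
    ∑ j, |w j| ^ p ≤ ∑ j, dualMap p (w j) * d j := by
  have hderiv : HasDerivAt (fun t : ℝ ↦ ∑ j, |w j + t * (d j - w j)| ^ p)
      (∑ j, p * dualMap p (w j) * (d j - w j)) 0 := by
    refine HasDerivAt.fun_sum fun j _ ↦ ?_
    simpa [Function.comp_def] using (hasDerivAt_abs_rpow_dualMap hp (w j + 0 * (d j - w j))).comp 0
      (((hasDerivAt_id (0 : ℝ)).mul_const (d j - w j)).const_add (w j))
  have hslope : 0 ≤ ∑ j, p * dualMap p (w j) * (d j - w j) := by
    simpa using hmin.localize.hasFDerivWithinAt_nonneg hderiv.hasFDerivAt.hasFDerivWithinAt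
      (mem_posTangentConeAt_of_segment_subset (y := 1) (by simp [segment_eq_Icc]))
  have hexpand : ∑ j, p * dualMap p (w j) * (d j - w j) =
      p * (∑ j, dualMap p (w j) * d j - ∑ j, |w j| ^ p) := by
    simp only [mul_sub, sum_sub_distrib, mul_sum, mul_assoc, dualMap_mul_self (by linarith : p ≠ 0)]
  rw [hexpand] at hslope
  exact sub_nonneg.1 (nonneg_of_mul_nonneg_right hslope (by linarith))

end PNorm

section Simplex

variable {ι κ : Type*} [Fintype ι] [Fintype κ] {p : ℝ}

lemma sum_abs_rpow_le_sum_dualMap_mul_of_isMinOn (hp : 1 < p) (G : κ → ι → ℝ) {α : κ → ℝ}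
    (hα : α ∈ stdSimplex ℝ κ)
    (hmin : IsMinOn (fun β ↦ pNorm p (∑ i, β i • G i)) (stdSimplex ℝ κ) α) (i : κ) :
    ∑ j, |(∑ k, α k • G k) j| ^ p ≤ ∑ j, dualMap p ((∑ k, α k • G k) j) * G i j := by
  classical
  refine sum_abs_rpow_le_sum_dualMap_mul hp _ _ (isMinOn_iff.2 fun t ht ↦ ?_)
  have hβ : (1 - t) • α + t • Pi.single i 1 ∈ stdSimplex ℝ κ :=
    convex_stdSimplex ℝ κ hα (single_mem_stdSimplex ℝ i) (by linarith [ht.2]) ht.1 (by ring)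
  have hcomb : ∑ k, ((1 - t) • α + t • Pi.single i 1 : κ → ℝ) k • G k =
      ∑ k, α k • G k + t • (G i - ∑ k, α k • G k) := by
    simp only [Pi.add_apply, Pi.smul_apply, smul_eq_mul, Pi.single_apply, mul_ite, mul_one,
      mul_zero, add_smul, mul_smul, ite_smul, zero_smul, sum_add_distrib, ← smul_sum, sum_ite_eq',
      mem_univ, ↓reduceIte]
    module
  have := isMinOn_iff.1 hmin _ hβ
  simp only [hcomb, pNorm_le_pNorm_iff (zero_lt_one.trans hp)] at this
  simpa using this

lemma le_sum_smul_apply_mul_of_mem_stdSimplex {G : κ → ι → ℝ} {α : κ → ℝ}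
    (hα : α ∈ stdSimplex ℝ κ) {v : ι → ℝ} {r : ℝ} (h : ∀ i, r ≤ ∑ j, G i j * v j) :
    r ≤ ∑ j, (∑ i, α i • G i) j * v j :=
  calc r = ∑ i, α i * r := by rw [← sum_mul, hα.2, one_mul]
    _ ≤ ∑ i, α i * ∑ j, G i j * v j :=
        sum_le_sum fun i _ ↦ mul_le_mul_of_nonneg_left (h i) (hα.1 i)
    _ = ∑ j, (∑ i, α i • G i) j * v j := by
        simp only [Finset.sum_apply, Pi.smul_apply, smul_eq_mul, sum_mul, mul_sum, mul_assoc]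
        exact sum_comm

end Simplex

theorem chebyshev_primal_recovery_from_dual_general
    (n m : ℕ) (p q : ℝ) (hp : 1 < p) (hq : q = p / (p - 1))
    (ghat : Fin m → Fin n → ℝ)
    (vstar : Fin n → ℝ) (rstar : ℝ)
    -- (v⋆, r⋆) is optimal for the primal problem
    (hfeas : (∑ j, |vstar j| ^ q) ^ (1 / q) ≤ 1 ∧
      ∀ i, rstar ≤ ∑ j, ghat i j * vstar j)
    (hopt : ∀ (v : Fin n → ℝ) (r : ℝ),
      (∑ j, |v j| ^ q) ^ (1 / q) ≤ 1 → (∀ i, r ≤ ∑ j, ghat i j * v j) → r ≤ rstar)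
    -- α⋆ is optimal for the dual problem
    (αstar : Fin m → ℝ) (hα : (∀ i, 0 ≤ αstar i) ∧ (∑ i, αstar i) = 1)
    (hαopt : ∀ α : Fin m → ℝ, (∀ i, 0 ≤ α i) → (∑ i, α i) = 1 →
      (∑ j, |∑ i, αstar i * ghat i j| ^ p) ^ (1 / p) ≤
        (∑ j, |∑ i, α i * ghat i j| ^ p) ^ (1 / p))
    (wstar : Fin n → ℝ) (hw : wstar = ∑ i, αstar i • ghat i)
    (hr : 0 < rstar) :
    wstar ≠ 0 ∧
    ∀ j, vstar j = Real.sign (wstar j) * |wstar j| ^ (p - 1) /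
        ((∑ k, |wstar k| ^ p) ^ (1 / p)) ^ (p - 1) := by
  have hpq : p.HolderConjugate q := (Real.holderConjugate_iff_eq_conjExponent hp).2 hq
  subst hw
  have hweak : rstar ≤ ∑ j, (∑ i, αstar i • ghat i) j * vstar j :=
    le_sum_smul_apply_mul_of_mem_stdSimplex hα hfeas.2
  have hw0 : ∑ i, αstar i • ghat i ≠ 0 := by
    intro h
    simp only [h, Pi.zero_apply, zero_mul, sum_const_zero] at hweak
    exact hr.not_ge hweak
  have hmin : IsMinOn (fun β ↦ pNorm p (∑ i, β i • ghat i)) (stdSimplex ℝ (Fin m)) αstar :=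
    isMinOn_iff.2 fun β hβ ↦ by simpa [pNorm, Finset.sum_apply] using hαopt β hβ.1 hβ.2
  have hstrong : pNorm p (∑ i, αstar i • ghat i) ≤ rstar :=
    hopt _ _ (pNorm_dualMap_div_pNorm hpq hw0).le fun i ↦ pNorm_le_sum_mul_dualMap_div_pNorm hp hw0
      (sum_abs_rpow_le_sum_dualMap_mul_of_isMinOn hp ghat hα hmin i)
  exact ⟨hw0, eq_dualMap_div_pNorm_of_pNorm_le_sum_mul hpq hw0 hfeas.1 (hstrong.trans hweak)⟩

/-- **Recovery of the primal Chebyshev-center direction from the dual solution.**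
For `1 < p < ∞` with conjugate `q = p/(p-1)` and `ℓ_p`-normalized gradients
`ĝ i = g i / ‖g i‖_p`, let `(v⋆, r⋆)` be optimal for the primal
`max r s.t. ĝ iᵀ v ≥ r, ‖v‖_q ≤ 1`, and let `α⋆` be optimal for the dual
`min_{α ∈ Δᵐ} ‖∑ i, α i • ĝ i‖_p`. Set `w⋆ = ∑ i, α⋆ i • ĝ i`. If `r⋆ > 0` then
`w⋆ ≠ 0` and `v⋆ = sgn(w⋆) ⊙ |w⋆|^(p-1) / ‖w⋆‖_p^(p-1)` componentwise. -/
theorem chebyshev_primal_recovery_from_dual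
    (n m : ℕ) (p q : ℝ) (hp : 1 < p) (hq : q = p / (p - 1))
    (g : Fin m → Fin n → ℝ) (hg : ∀ i, g i ≠ 0)
    (ghat : Fin m → Fin n → ℝ)
    (hghat : ∀ i, ghat i = ((∑ j, |g i j| ^ p) ^ (1 / p))⁻¹ • g i)
    (vstar : Fin n → ℝ) (rstar : ℝ)
    -- (v⋆, r⋆) is optimal for the primal problem
    (hfeas : (∑ j, |vstar j| ^ q) ^ (1 / q) ≤ 1 ∧
      ∀ i, rstar ≤ ∑ j, ghat i j * vstar j)
    (hopt : ∀ (v : Fin n → ℝ) (r : ℝ),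
      (∑ j, |v j| ^ q) ^ (1 / q) ≤ 1 → (∀ i, r ≤ ∑ j, ghat i j * v j) → r ≤ rstar)
    -- α⋆ is optimal for the dual problem
    (αstar : Fin m → ℝ) (hα : (∀ i, 0 ≤ αstar i) ∧ (∑ i, αstar i) = 1)
    (hαopt : ∀ α : Fin m → ℝ, (∀ i, 0 ≤ α i) → (∑ i, α i) = 1 →
      (∑ j, |∑ i, αstar i * ghat i j| ^ p) ^ (1 / p) ≤
        (∑ j, |∑ i, α i * ghat i j| ^ p) ^ (1 / p))
    (wstar : Fin n → ℝ) (hw : wstar = ∑ i, αstar i • ghat i)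
    (hr : 0 < rstar) :
    wstar ≠ 0 ∧
    ∀ j, vstar j = Real.sign (wstar j) * |wstar j| ^ (p - 1) /
        ((∑ k, |wstar k| ^ p) ^ (1 / p)) ^ (p - 1) :=
  chebyshev_primal_recovery_from_dual_general n m p q hp hq ghat vstar rstar hfeas hopt αstar hα
    hαopt wstar hw hr
end

section
/- In the Euclidean case p = q = 2, if r* > 0 then the primal Chebyshev-center direction is recovered from the dual aggregate w* = Σ α*_i ĝ_i by v* = w*/‖w*‖_2, and it satisfies ĝ_i^T v* ≥ ‖w*‖_2 for all i. -/
/-!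
The minimal-norm point `w⋆` of the convex hull of the `ĝ i` is the projection of `0` onto that
hull, so `⟪0 - w⋆, ĝ i - w⋆⟫ ≤ 0`, i.e. `‖w⋆‖² ≤ ⟪w⋆, ĝ i⟫`; dividing by `‖w⋆‖` shows that the
direction `v⋆` achieves margin `‖w⋆‖`. Conversely, any `v` in the unit ball with margin `r`
gives `r ≤ ∑ α⋆ i ⟪ĝ i, v⟫ = ⟪w⋆, v⟫ ≤ ‖w⋆‖` by Cauchy–Schwarz (weak duality).
-/

open scoped RealInnerProductSpace

section MinimalNorm

variable {F : Type*} [NormedAddCommGroup F] [InnerProductSpace ℝ F]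

theorem sq_norm_le_real_inner_of_isMinOn_norm {K : Set F} (hK : Convex ℝ K) {w x : F}
    (hw : w ∈ K) (hmin : IsMinOn (‖·‖) K w) (hx : x ∈ K) : ‖w‖ ^ 2 ≤ ⟪w, x⟫ := by
  have : Nonempty K := ⟨⟨w, hw⟩⟩
  have hinf : ‖0 - w‖ = ⨅ y : K, ‖0 - (y : F)‖ := by
    simp only [zero_sub, norm_neg]
    exact le_antisymm (le_ciInf fun y => hmin y.2)
      (ciInf_le ⟨0, by rintro _ ⟨y, rfl⟩; positivity⟩ (⟨w, hw⟩ : K))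
  have hproj := (norm_eq_iInf_iff_real_inner_le_zero hK hw).1 hinf x hx
  rw [zero_sub, inner_neg_left, inner_sub_right, real_inner_self_eq_norm_sq] at hproj
  linarith

theorem norm_le_real_inner_inv_norm_smul {w x : F} (h : ‖w‖ ^ 2 ≤ ⟪w, x⟫) :
    ‖w‖ ≤ ⟪x, ‖w‖⁻¹ • w⟫ :=
  calc ‖w‖ = ‖w‖⁻¹ * ‖w‖ ^ 2 := by rw [sq, ← mul_assoc, inv_mul_mul_self]
    _ ≤ ‖w‖⁻¹ * ⟪w, x⟫ := by gcongr
    _ = ⟪x, ‖w‖⁻¹ • w⟫ := by rw [real_inner_smul_right, real_inner_comm]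

theorem norm_inv_norm_smul_le_one (w : F) : ‖‖w‖⁻¹ • w‖ ≤ 1 := by
  rw [norm_smul, norm_inv, norm_norm]
  exact inv_mul_le_one_of_le₀ le_rfl (norm_nonneg w)

end MinimalNorm

section ConvexCombination

variable {F ι : Type*} [NormedAddCommGroup F] [InnerProductSpace ℝ F] [Fintype ι]
  {u : ι → F} {α : ι → ℝ}

theorem sq_norm_le_real_inner_of_isMinOn_stdSimplex (hα : α ∈ stdSimplex ℝ ι)
    (hmin : ∀ β ∈ stdSimplex ℝ ι, ‖∑ i, α i • u i‖ ≤ ‖∑ i, β i • u i‖) (i : ι) :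
    ‖∑ j, α j • u j‖ ^ 2 ≤ ⟪∑ j, α j • u j, u i⟫ := by
  classical
  let L := Fintype.linearCombination ℝ u
  have hL : ∀ β, L β = ∑ j, β j • u j := Fintype.linearCombination_apply ℝ u
  have hK : Convex ℝ (L '' stdSimplex ℝ ι) := (convex_stdSimplex ℝ ι).linear_image L
  have hvertex : u i = L (Pi.single i 1) := by simp [hL, Pi.single_apply]
  rw [hvertex, ← hL]
  refine sq_norm_le_real_inner_of_isMinOn_norm hK ⟨α, hα, rfl⟩ ?_
    ⟨_, single_mem_stdSimplex ℝ i, rfl⟩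
  rintro _ ⟨β, hβ, rfl⟩
  show ‖L α‖ ≤ ‖L β‖
  rw [hL, hL]
  exact hmin β hβ

theorem le_real_inner_sum_smul_of_le_real_inner (hα : α ∈ stdSimplex ℝ ι) {r : ℝ} {v : F}
    (h : ∀ i, r ≤ ⟪u i, v⟫) : r ≤ ⟪∑ i, α i • u i, v⟫ :=
  calc r = ∑ i, α i * r := by rw [← Finset.sum_mul, hα.2, one_mul]
    _ ≤ ∑ i, α i * ⟪u i, v⟫ :=
      Finset.sum_le_sum fun i _ => mul_le_mul_of_nonneg_left (h i) (hα.1 i)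
    _ = ⟪∑ i, α i • u i, v⟫ := by simp only [sum_inner, real_inner_smul_left]

end ConvexCombination

theorem chebyshev_recovery_euclidean_general
    (n m : ℕ)
    (ghat : Fin m → EuclideanSpace ℝ (Fin n))
    (αstar : Fin m → ℝ) (hα : (∀ i, 0 ≤ αstar i) ∧ (∑ i, αstar i) = 1)
    (hαopt : ∀ α : Fin m → ℝ, (∀ i, 0 ≤ α i) → (∑ i, α i) = 1 →
      ‖∑ i, αstar i • ghat i‖ ≤ ‖∑ i, α i • ghat i‖)
    (wstar : EuclideanSpace ℝ (Fin n)) (hw : wstar = ∑ i, αstar i • ghat i)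
    (vstar : EuclideanSpace ℝ (Fin n)) (hv : vstar = ‖wstar‖⁻¹ • wstar) :
    (∀ i, ‖wstar‖ ≤ ⟪ghat i, vstar⟫) ∧
    IsGreatest {r : ℝ | ∃ v : EuclideanSpace ℝ (Fin n), ‖v‖ ≤ 1 ∧
        ∀ i, r ≤ ⟪ghat i, v⟫} ‖wstar‖ := by
  subst hw hv
  have hmargin : ∀ i, _ ≤ ⟪ghat i, _⟫ := fun i => norm_le_real_inner_inv_norm_smul
    (sq_norm_le_real_inner_of_isMinOn_stdSimplex hα (fun β hβ => hαopt β hβ.1 hβ.2) i)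
  refine ⟨hmargin, ⟨_, norm_inv_norm_smul_le_one _, hmargin⟩, ?_⟩
  rintro r ⟨v, hv, hr⟩
  calc r ≤ ⟪∑ i, αstar i • ghat i, v⟫ := le_real_inner_sum_smul_of_le_real_inner hα hr
    _ ≤ ‖∑ i, αstar i • ghat i‖ * ‖v‖ := real_inner_le_norm _ _
    _ ≤ ‖∑ i, αstar i • ghat i‖ := mul_le_of_le_one_right (norm_nonneg _) hv

/-- **Euclidean recovery of the Chebyshev-center direction.**
In the case `p = q = 2`, with `ĝ i = g i / ‖g i‖₂` and `α⋆` optimal for the dual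
`min_{α ∈ Δᵐ} ‖∑ i, α i • ĝ i‖₂`, if `r⋆ = ‖w⋆‖₂ > 0` where `w⋆ = ∑ i, α⋆ i • ĝ i`,
then `v⋆ = w⋆ / ‖w⋆‖₂` satisfies `ĝ iᵀ v⋆ ≥ ‖w⋆‖₂` for all `i`, and `v⋆` is optimal for
the primal problem `max r s.t. ĝ iᵀ v ≥ r, ‖v‖₂ ≤ 1` with optimal value `‖w⋆‖₂`. -/
theorem chebyshev_recovery_euclidean
    (n m : ℕ) (g : Fin m → EuclideanSpace ℝ (Fin n)) (hg : ∀ i, g i ≠ 0)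
    (ghat : Fin m → EuclideanSpace ℝ (Fin n)) (hghat : ∀ i, ghat i = ‖g i‖⁻¹ • g i)
    (αstar : Fin m → ℝ) (hα : (∀ i, 0 ≤ αstar i) ∧ (∑ i, αstar i) = 1)
    (hαopt : ∀ α : Fin m → ℝ, (∀ i, 0 ≤ α i) → (∑ i, α i) = 1 →
      ‖∑ i, αstar i • ghat i‖ ≤ ‖∑ i, α i • ghat i‖)
    (wstar : EuclideanSpace ℝ (Fin n)) (hw : wstar = ∑ i, αstar i • ghat i)
    (hr : 0 < ‖wstar‖)
    (vstar : EuclideanSpace ℝ (Fin n)) (hv : vstar = ‖wstar‖⁻¹ • wstar) :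
    (∀ i, ‖wstar‖ ≤ ⟪ghat i, vstar⟫) ∧
    IsGreatest {r : ℝ | ∃ v : EuclideanSpace ℝ (Fin n), ‖v‖ ≤ 1 ∧
        ∀ i, r ≤ ⟪ghat i, v⟫} ‖wstar‖ :=
  chebyshev_recovery_euclidean_general n m ghat αstar hα hαopt wstar hw vstar hv
end

section
/- Let L_1,...,L_m be differentiable with total loss L = Σ L_i β-smooth w.r.t. the ℓ_q norm, and suppose at each iterate θ_t all gradients g_i(θ_t) are nonzero and the Chebyshev-center radius satisfies r_t* > ε. With update θ_{t+1} = θ_t - (1/β) d_t, where d_t = (Σ_i g_i(θ_t)^T v_t) v_t and v_t is the optimal ℓ_q-unit Chebyshev direction, we have min_{0≤t≤T-1} ‖∇L(θ_t)‖_p² ≤ 2β(L(θ_0) - L(θ*))/(ε² T), where L(θ*) ≤ L(θ_t) for all t. -/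
/-!
Feasibility of the Chebyshev direction `v` gives `g_iᵀ v ≥ r ‖g_i‖_p` for every `i`, so by
Minkowski `∇Lᵀ v ≥ r ‖∇L‖_p ≥ ε ‖∇L‖_p`. The update moves by `(∇Lᵀ v) / β` along the `q`-unit
vector `v`, so the descent lemma gives a decrease of at least
`(∇Lᵀ v)² / (2β) ≥ ε² ‖∇L‖_p² / (2β)` per step. Over `T` steps these decreases add up to at most
`L(θ₀) - L(θ*)`, and the smallest one is at most their average.
-/

open Finset

/-- `ι → ℝ` carries the sup norm; this is its `ℓ^p` norm, transported from `PiLp`. -/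
noncomputable def lpSeminorm (ι : Type*) [Fintype ι] (p : ℝ) (hp : 1 ≤ p) : Seminorm ℝ (ι → ℝ) :=
  haveI : Fact (1 ≤ ENNReal.ofReal p) := ⟨ENNReal.one_le_ofReal.mpr hp⟩
  (normSeminorm ℝ (PiLp (ENNReal.ofReal p) fun _ : ι => ℝ)).comp
    (WithLp.linearEquiv (ENNReal.ofReal p) ℝ (ι → ℝ)).symm.toLinearMap

theorem lpSeminorm_apply {ι : Type*} [Fintype ι] {p : ℝ} (hp : 1 ≤ p) (x : ι → ℝ) :
    lpSeminorm ι p hp x = (∑ j, |x j| ^ p) ^ (1 / p) := by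
  have : Fact (1 ≤ ENNReal.ofReal p) := ⟨ENNReal.one_le_ofReal.mpr hp⟩
  have hp' : (ENNReal.ofReal p).toReal = p := ENNReal.toReal_ofReal (by linarith)
  rw [lpSeminorm, Seminorm.comp_apply, coe_normSeminorm, PiLp.norm_eq_sum (by linarith), hp']
  rfl

theorem ContinuousLinearMap.apply_eq_sum_mul_apply_single {ι : Type*} [Fintype ι] [DecidableEq ι]
    (ℓ : (ι → ℝ) →L[ℝ] ℝ) (w : ι → ℝ) : ℓ w = ∑ j, w j * ℓ (Pi.single j 1) := by
  have := congr($((LinearEquiv.piRing ℝ ℝ ι ℝ).symm_apply_apply (ℓ : (ι → ℝ) →ₗ[ℝ] ℝ)) w)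
  rw [LinearEquiv.piRing_symm_apply] at this
  exact this.symm

theorem fderiv_sum_apply {ι κ : Type*} [Fintype ι] [Fintype κ] [DecidableEq κ]
    {L : ι → (κ → ℝ) → ℝ} {x : κ → ℝ} (hL : ∀ i, DifferentiableAt ℝ (L i) x) (w : κ → ℝ) :
    fderiv ℝ (fun y => ∑ i, L i y) x w = ∑ i, ∑ j, fderiv ℝ (L i) x (Pi.single j 1) * w j := by
  rw [fderiv_fun_sum fun i _ => hL i, _root_.sum_apply]
  refine sum_congr rfl fun i _ => ?_
  rw [(fderiv ℝ (L i) x).apply_eq_sum_mul_apply_single w]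
  simp only [mul_comm]

section

variable {V : Type*} [AddCommGroup V] [Module ℝ V]

theorem mul_seminorm_sum_le_sum {ι : Type*} (N : Seminorm ℝ V) (ℓ : V →ₗ[ℝ] ℝ) {r : ℝ}
    (hr : 0 < r) (s : Finset ι) (x : ι → V) (hx : ∀ i ∈ s, r ≤ ℓ ((N (x i))⁻¹ • x i)) :
    r * N (∑ i ∈ s, x i) ≤ ∑ i ∈ s, ℓ (x i) := by
  have hterm : ∀ i ∈ s, r * N (x i) ≤ ℓ (x i) := by
    intro i hi
    have h := hx i hi
    rw [map_smul, smul_eq_mul] at h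
    -- `r > 0` rules out `N (x i) = 0`, where the normalisation `0⁻¹ • x i` is junk
    have hN : 0 < N (x i) := (apply_nonneg N _).lt_of_ne' fun h0 => by
      rw [h0, inv_zero, zero_mul] at h
      linarith
    rwa [le_inv_mul_iff₀ hN, mul_comm] at h
  calc r * N (∑ i ∈ s, x i)
      ≤ r * ∑ i ∈ s, N (x i) := by
        gcongr
        exact le_sum_of_subadditive N (map_zero N).le (map_add_le_add N) s x
    _ = ∑ i ∈ s, r * N (x i) := mul_sum ..
    _ ≤ ∑ i ∈ s, ℓ (x i) := sum_le_sum hterm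

theorem add_sq_div_le_of_smooth (N : Seminorm ℝ V) (ℓ : V →ₗ[ℝ] ℝ) {f : V → ℝ} {β : ℝ}
    (hβ : 0 < β) {x v : V} (hsmooth : ∀ y, f y ≤ f x + ℓ (y - x) + β / 2 * N (y - x) ^ 2)
    (hv : N v ≤ 1) :
    f (x - (1 / β) • (ℓ v • v)) + ℓ v ^ 2 / (2 * β) ≤ f x := by
  have hstep : x - (1 / β) • (ℓ v • v) - x = (-(ℓ v / β)) • v := by
    rw [smul_smul, sub_sub_cancel_left, ← neg_smul, one_div_mul_eq_div]
  have hlin : ℓ ((-(ℓ v / β)) • v) = -(2 * (ℓ v ^ 2 / (2 * β))) := by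
    rw [map_smul, smul_eq_mul]
    field_simp
  have hnorm : β / 2 * N ((-(ℓ v / β)) • v) ^ 2 ≤ ℓ v ^ 2 / (2 * β) :=
    calc β / 2 * N ((-(ℓ v / β)) • v) ^ 2
        = β / 2 * ((ℓ v / β) ^ 2 * N v ^ 2) := by
          rw [map_smul_eq_mul, Real.norm_eq_abs, abs_neg, mul_pow, sq_abs]
      _ ≤ β / 2 * (ℓ v / β) ^ 2 := by
          gcongr
          exact mul_le_of_le_one_right (sq_nonneg _) (pow_le_one₀ (apply_nonneg N v) hv)
      _ = ℓ v ^ 2 / (2 * β) := by field_simp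
  have := hsmooth (x - (1 / β) • (ℓ v • v))
  rw [hstep, hlin] at this
  linarith

end

theorem exists_lt_le_div_of_forall_add_le {u a : ℕ → ℝ} {m : ℝ} {T : ℕ} (hT : 0 < T)
    (hdesc : ∀ t, u (t + 1) + a t ≤ u t) (hlow : ∀ t, m ≤ u t) :
    ∃ t < T, a t ≤ (u 0 - m) / T := by
  have hsum : ∑ t ∈ range T, a t ≤ ∑ _t ∈ range T, (u 0 - m) / T :=
    calc ∑ t ∈ range T, a t
        ≤ ∑ t ∈ range T, (u t - u (t + 1)) := sum_le_sum fun t _ => by linarith [hdesc t]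
      _ = u 0 - u T := sum_range_sub' u T
      _ ≤ u 0 - m := by linarith [hlow T]
      _ = ∑ _t ∈ range T, (u 0 - m) / T := by
        rw [sum_const, card_range, nsmul_eq_mul]
        field_simp
  obtain ⟨t, ht, hle⟩ := exists_le_of_sum_le (nonempty_range_iff.mpr hT.ne') hsum
  exact ⟨t, mem_range.mp ht, hle⟩

theorem dual_chebyshev_convergence_general
    (n m : ℕ) (p q : ℝ) (hp : 1 < p) (hq : q = p / (p - 1))
    (β ε : ℝ) (hβ : 0 < β) (hε : 0 < ε)
    (L : Fin m → (Fin n → ℝ) → ℝ) (hdiff : ∀ i, Differentiable ℝ (L i))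
    (Ltot : (Fin n → ℝ) → ℝ) (hLtot : ∀ x, Ltot x = ∑ i, L i x)
    (hsmooth : ∀ θ θ' : Fin n → ℝ,
      Ltot θ' ≤ Ltot θ + fderiv ℝ Ltot θ (θ' - θ) +
        β / 2 * ((∑ j, |θ' j - θ j| ^ q) ^ (1 / q)) ^ 2)
    (T : ℕ) (hT : 0 < T)
    (θ : ℕ → (Fin n → ℝ)) (θstar : Fin n → ℝ)
    (hlow : ∀ t, Ltot θstar ≤ Ltot (θ t))
    (g : Fin m → ℕ → Fin n → ℝ)
    (hgrad : ∀ i t j, g i t j = fderiv ℝ (L i) (θ t) (Pi.single j 1))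
    (r : ℕ → ℝ) (v : ℕ → Fin n → ℝ)
    -- `(v t, r t)` is optimal for the Chebyshev-center problem at `θ t`
    (hvfeas : ∀ t, (∑ j, |v t j| ^ q) ^ (1 / q) ≤ 1 ∧
      ∀ i, r t ≤ ∑ j, (((∑ k, |g i t k| ^ p) ^ (1 / p))⁻¹ * g i t j) * v t j)
    (hrε : ∀ t, ε < r t)
    (d : ℕ → Fin n → ℝ)
    (hd : ∀ t, d t = (∑ i, ∑ j, g i t j * v t j) • v t)
    (hupd : ∀ t, θ (t + 1) = θ t - (1 / β) • d t) :
    ∃ t < T,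
      ((∑ j, |fderiv ℝ Ltot (θ t) (Pi.single j 1)| ^ p) ^ (1 / p)) ^ 2 ≤
        2 * β * (Ltot (θ 0) - Ltot θstar) / (ε ^ 2 * T) := by
  have hq1 : 1 ≤ q := by
    rw [hq, le_div_iff₀ (by linarith)]
    linarith
  set Np := lpSeminorm (Fin n) p hp.le with hNp
  set Nq := lpSeminorm (Fin n) q hq1 with hNq
  have hderiv : ∀ t w, fderiv ℝ Ltot (θ t) w = ∑ i, ∑ j, g i t j * w j := by
    intro t w
    rw [funext hLtot, fderiv_sum_apply fun i => (hdiff i).differentiableAt]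
    simp only [← hgrad]
  have hgradNorm : ∀ t, (∑ j, |fderiv ℝ Ltot (θ t) (Pi.single j 1)| ^ p) ^ (1 / p)
      = Np (∑ i, g i t) := by
    intro t
    simp [hNp, lpSeminorm_apply, hderiv, Pi.single_apply]
  have hcheb : ∀ t, ε * Np (∑ i, g i t) ≤ fderiv ℝ Ltot (θ t) (v t) := fun t =>
    calc ε * Np (∑ i, g i t) ≤ r t * Np (∑ i, g i t) :=
          mul_le_mul_of_nonneg_right (hrε t).le (apply_nonneg Np _)
      _ ≤ ∑ i, ∑ j, g i t j * v t j := mul_seminorm_sum_le_sum Np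
          ((dotProductBilin ℝ ℝ).flip (v t)) (hε.trans (hrε t)) univ (g · t) fun i _ => by
            rw [hNp, lpSeminorm_apply]
            exact (hvfeas t).2 i
      _ = fderiv ℝ Ltot (θ t) (v t) := (hderiv t (v t)).symm
  have hdesc : ∀ t, Ltot (θ (t + 1)) + fderiv ℝ Ltot (θ t) (v t) ^ 2 / (2 * β) ≤ Ltot (θ t) := by
    intro t
    rw [hupd, hd, ← hderiv]
    exact add_sq_div_le_of_smooth Nq (fderiv ℝ Ltot (θ t) : (Fin n → ℝ) →ₗ[ℝ] ℝ) hβ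
      (fun y => by simpa [hNq, lpSeminorm_apply] using hsmooth (θ t) y)
      (by simpa [hNq, lpSeminorm_apply] using (hvfeas t).1)
  obtain ⟨t, ht, hle⟩ := exists_lt_le_div_of_forall_add_le hT
    (a := fun t => (ε * Np (∑ i, g i t)) ^ 2 / (2 * β))
    (fun t => (hdesc t).trans' (by gcongr; exact hcheb t))
    hlow
  refine ⟨t, ht, ?_⟩
  have hT' : (0 : ℝ) < T := by exact_mod_cast hT
  rw [div_le_div_iff₀ (by positivity) hT'] at hle
  rw [hgradNorm, le_div_iff₀ (by positivity)]
  linear_combination hle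

/-- **Convergence of the DualChebyshev method.**
Let `L i` be differentiable with `β`-smooth total loss `L = ∑ i, L i` w.r.t. the `ℓ_q`
norm, `1 < p < ∞`, `q = p/(p-1)`. Suppose at each iterate `θ t` all gradients are
nonzero and the Chebyshev radius `r t` exceeds `ε`, `v t` is the optimal `ℓ_q`-unit
Chebyshev direction, and `θ (t+1) = θ t - (1/β) • d t` with
`d t = (∑ i, g i (θ t)ᵀ v t) • v t`. If `L θstar ≤ L (θ t)` for all `t`, then
`min_{0 ≤ t ≤ T-1} ‖∇L(θ t)‖_p² ≤ 2β (L (θ 0) - L θstar) / (ε² T)`. -/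
theorem dual_chebyshev_convergence
    (n m : ℕ) (p q : ℝ) (hp : 1 < p) (hq : q = p / (p - 1))
    (β ε : ℝ) (hβ : 0 < β) (hε : 0 < ε)
    (L : Fin m → (Fin n → ℝ) → ℝ) (hdiff : ∀ i, Differentiable ℝ (L i))
    (Ltot : (Fin n → ℝ) → ℝ) (hLtot : ∀ x, Ltot x = ∑ i, L i x)
    (hsmooth : ∀ θ θ' : Fin n → ℝ,
      Ltot θ' ≤ Ltot θ + fderiv ℝ Ltot θ (θ' - θ) +
        β / 2 * ((∑ j, |θ' j - θ j| ^ q) ^ (1 / q)) ^ 2)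
    (T : ℕ) (hT : 0 < T)
    (θ : ℕ → (Fin n → ℝ)) (θstar : Fin n → ℝ)
    (hlow : ∀ t, Ltot θstar ≤ Ltot (θ t))
    (g : Fin m → ℕ → Fin n → ℝ)
    (hgrad : ∀ i t j, g i t j = fderiv ℝ (L i) (θ t) (Pi.single j 1))
    (hgnz : ∀ i t, g i t ≠ 0)
    (r : ℕ → ℝ) (v : ℕ → Fin n → ℝ)
    -- `(v t, r t)` is optimal for the Chebyshev-center problem at `θ t`
    (hvfeas : ∀ t, (∑ j, |v t j| ^ q) ^ (1 / q) ≤ 1 ∧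
      ∀ i, r t ≤ ∑ j, (((∑ k, |g i t k| ^ p) ^ (1 / p))⁻¹ * g i t j) * v t j)
    (hvopt : ∀ t (v' : Fin n → ℝ) (r' : ℝ),
      (∑ j, |v' j| ^ q) ^ (1 / q) ≤ 1 →
      (∀ i, r' ≤ ∑ j, (((∑ k, |g i t k| ^ p) ^ (1 / p))⁻¹ * g i t j) * v' j) →
      r' ≤ r t)
    (hrε : ∀ t, ε < r t)
    (d : ℕ → Fin n → ℝ)
    (hd : ∀ t, d t = (∑ i, ∑ j, g i t j * v t j) • v t)
    (hupd : ∀ t, θ (t + 1) = θ t - (1 / β) • d t) :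
    ∃ t < T,
      ((∑ j, |fderiv ℝ Ltot (θ t) (Pi.single j 1)| ^ p) ^ (1 / p)) ^ 2 ≤
        2 * β * (Ltot (θ 0) - Ltot θstar) / (ε ^ 2 * T) :=
  dual_chebyshev_convergence_general n m p q hp hq β ε hβ hε L hdiff Ltot hLtot hsmooth T hT θ θstar
    hlow g hgrad r v hvfeas hrε d hd hupd
end

section
/- For m = 2 with unit ℓ_2 vectors ĝ_1 ≠ -ĝ_2, the Chebyshev-center problem max r s.t. ĝ_1^T v ≥ r, ĝ_2^T v ≥ r, ‖v‖_2 ≤ 1 has optimal direction v* = (ĝ_1 + ĝ_2)/‖ĝ_1 + ĝ_2‖_2, the normalized angle bisector, with optimal value r* = (1 + ĝ_1^T ĝ_2)/‖ĝ_1 + ĝ_2‖_2, and both constraints are active at the optimum. -/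
/-!
Adding the two constraints gives `2 r ≤ ⟪ĝ₁ + ĝ₂, v⟫ ≤ ‖ĝ₁ + ĝ₂‖` by Cauchy–Schwarz. Conversely, for
unit vectors `‖ĝ₁ + ĝ₂‖² = 2 (1 + ⟪ĝ₁, ĝ₂⟫) = 2 ⟪ĝᵢ, ĝ₁ + ĝ₂⟫`, so the normalized bisector meets both
constraints with value `‖ĝ₁ + ĝ₂‖ / 2`, which is also `(1 + ⟪ĝ₁, ĝ₂⟫) / ‖ĝ₁ + ĝ₂‖`.
-/

open scoped RealInnerProductSpace

section

variable {E : Type*} [NormedAddCommGroup E] [InnerProductSpace ℝ E] {x y : E}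

theorem norm_inv_norm_smul_le_one_s14 (v : E) : ‖‖v‖⁻¹ • v‖ ≤ 1 := by
  rw [norm_smul, norm_inv, norm_norm]
  exact inv_mul_le_one

theorem le_norm_add_div_two_of_le_inner {v : E} {r : ℝ} (hv : ‖v‖ ≤ 1)
    (hx : r ≤ ⟪x, v⟫) (hy : r ≤ ⟪y, v⟫) : r ≤ ‖x + y‖ / 2 := by
  have : ⟪x + y, v⟫ ≤ ‖x + y‖ :=
    calc ⟪x + y, v⟫ ≤ ‖x + y‖ * ‖v‖ := real_inner_le_norm _ _
      _ ≤ ‖x + y‖ := mul_le_of_le_one_right (norm_nonneg _) hv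
  rw [inner_add_left] at this
  linarith

theorem norm_add_sq_eq_two_mul_one_add_inner (hx : ‖x‖ = 1) (hy : ‖y‖ = 1) :
    ‖x + y‖ ^ 2 = 2 * (1 + ⟪x, y⟫) := by
  rw [norm_add_sq_real, hx, hy]
  ring

theorem inner_add_right_eq_norm_add_sq_div_two (hx : ‖x‖ = 1) (hy : ‖y‖ = 1) :
    ⟪x, x + y⟫ = ‖x + y‖ ^ 2 / 2 := by
  rw [norm_add_sq_eq_two_mul_one_add_inner hx hy, inner_add_right,
    real_inner_self_eq_norm_sq, hx]
  ring

theorem inner_inv_norm_smul_add (hx : ‖x‖ = 1) (hy : ‖y‖ = 1) :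
    ⟪x, ‖x + y‖⁻¹ • (x + y)⟫ = ‖x + y‖ / 2 := by
  rw [real_inner_smul_right, inner_add_right_eq_norm_add_sq_div_two hx hy, sq, mul_div_assoc',
    ← mul_assoc, inv_mul_mul_self]

theorem one_add_inner_div_norm_add (hx : ‖x‖ = 1) (hy : ‖y‖ = 1) :
    (1 + ⟪x, y⟫) / ‖x + y‖ = ‖x + y‖ / 2 := by
  have h := inner_inv_norm_smul_add hx hy
  rwa [real_inner_smul_right, inner_add_right_eq_norm_add_sq_div_two hx hy,
    norm_add_sq_eq_two_mul_one_add_inner hx hy, mul_div_cancel_left₀ _ two_ne_zero,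
    inv_mul_eq_div] at h

end

theorem two_objective_chebyshev_is_bisector_general
    (n : ℕ) (g1 g2 : EuclideanSpace ℝ (Fin n))
    (h1 : ‖g1‖ = 1) (h2 : ‖g2‖ = 1)
    (vstar : EuclideanSpace ℝ (Fin n)) (hv : vstar = ‖g1 + g2‖⁻¹ • (g1 + g2))
    (rstar : ℝ) (hr : rstar = (1 + ⟪g1, g2⟫) / ‖g1 + g2‖) :
    IsGreatest {r : ℝ | ∃ v : EuclideanSpace ℝ (Fin n),
        ‖v‖ ≤ 1 ∧ r ≤ ⟪g1, v⟫ ∧ r ≤ ⟪g2, v⟫} rstar ∧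
    ‖vstar‖ ≤ 1 ∧ ⟪g1, vstar⟫ = rstar ∧ ⟪g2, vstar⟫ = rstar := by
  have hr' : rstar = ‖g1 + g2‖ / 2 := hr.trans (one_add_inner_div_norm_add h1 h2)
  have hnv : ‖vstar‖ ≤ 1 := hv ▸ norm_inv_norm_smul_le_one_s14 _
  have ha1 : ⟪g1, vstar⟫ = rstar := by rw [hv, hr', inner_inv_norm_smul_add h1 h2]
  have ha2 : ⟪g2, vstar⟫ = rstar := by
    have h := inner_inv_norm_smul_add h2 h1
    rwa [add_comm g2 g1, ← hv, ← hr'] at h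
  refine ⟨⟨⟨vstar, hnv, ha1.ge, ha2.ge⟩, ?_⟩, hnv, ha1, ha2⟩
  rintro r ⟨v, hv1, hr1, hr2⟩
  exact hr' ▸ le_norm_add_div_two_of_le_inner hv1 hr1 hr2

/-- **Two-objective Chebyshev center is the angle bisector.**
For unit `ℓ₂` vectors `ĝ₁ ≠ -ĝ₂`, the problem
`max r s.t. ĝ₁ᵀ v ≥ r, ĝ₂ᵀ v ≥ r, ‖v‖₂ ≤ 1` has optimal direction
`v⋆ = (ĝ₁ + ĝ₂)/‖ĝ₁ + ĝ₂‖₂` with optimal value `r⋆ = (1 + ĝ₁ᵀĝ₂)/‖ĝ₁ + ĝ₂‖₂`,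
and both constraints are active at the optimum. -/
theorem two_objective_chebyshev_is_bisector
    (n : ℕ) (g1 g2 : EuclideanSpace ℝ (Fin n))
    (h1 : ‖g1‖ = 1) (h2 : ‖g2‖ = 1) (hne : g1 ≠ -g2)
    (vstar : EuclideanSpace ℝ (Fin n)) (hv : vstar = ‖g1 + g2‖⁻¹ • (g1 + g2))
    (rstar : ℝ) (hr : rstar = (1 + ⟪g1, g2⟫) / ‖g1 + g2‖) :
    IsGreatest {r : ℝ | ∃ v : EuclideanSpace ℝ (Fin n),
        ‖v‖ ≤ 1 ∧ r ≤ ⟪g1, v⟫ ∧ r ≤ ⟪g2, v⟫} rstar ∧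
    ‖vstar‖ ≤ 1 ∧ ⟪g1, vstar⟫ = rstar ∧ ⟪g2, vstar⟫ = rstar :=
  two_objective_chebyshev_is_bisector_general n g1 g2 h1 h2 vstar hv rstar hr
end
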